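/- arXiv:math/0209100 — 2 statements merged into one kernel-verified Lean document; each statement's English description precedes it below -/
import Mathlib

section
/- All bases of a Lagrangian orthogonal matroid have the same parity: if B is a collection of admissible n-subsets of [n] ∪ [n]* satisfying the Strong Exchange Property, then any two members of B have the same number of starred elements modulo 2. -/
/-!
Admissible `n`-sets contain exactly one of `x`, `x*` for every `x`. So if `a ∈ A \ C` and the
exchange partner `b ∈ C \ A` is not `a*`, then `a` and `b` lie over different indices, all four of
`a, b, a*, b*` lie in `A ∆ C`, and exactly two of them are starred. Hence `A ∆ {a, b, a*, b*}` is a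
basis of the same parity as `A` that is strictly closer to `C`, and induction on `|A ∆ C|` gives
the theorem.
-/

/-- `J n` models `[n] ∪ [n]*` : the element `(i, false)` is `i` and `(i, true)` is `i*`. -/
abbrev J (n : ℕ) := Fin n × Bool

/-- The star involution `i ↦ i*`, `i* ↦ i`. -/
def jstar {n : ℕ} (x : J n) : J n := (x.1, !x.2)

/-- `K* = { k* : k ∈ K }`. -/
def starSet {n : ℕ} (K : Finset (J n)) : Finset (J n) := K.image jstar

/-- A subset `K ⊆ [n] ∪ [n]*` is admissible if `K ∩ K* = ∅`. -/
def Admissible {n : ℕ} (K : Finset (J n)) : Prop := K ∩ starSet K = ∅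

/-- The Strong Exchange Property for a collection of subsets of `[n] ∪ [n]*`. -/
def StrongExchange {n : ℕ} (𝔅 : Set (Finset (J n))) : Prop :=
  ∀ A ∈ 𝔅, ∀ C ∈ 𝔅, ∀ a ∈ symmDiff A C, ∃ b ∈ C \ A, b ≠ jstar a ∧
    symmDiff A {a, b, jstar a, jstar b} ∈ 𝔅 ∧ symmDiff C {a, b, jstar a, jstar b} ∈ 𝔅

/-- The number of starred elements of a subset of `[n] ∪ [n]*`. -/
def starCount {n : ℕ} (A : Finset (J n)) : ℕ := (A.filter (fun x => x.2 = true)).card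

open Finset
open scoped symmDiff

section

variable {n : ℕ}

@[simp]
lemma jstar_jstar (x : J n) : jstar (jstar x) = x := by
  simp [jstar]

lemma jstar_injective : Function.Injective (jstar : J n → J n) :=
  Function.LeftInverse.injective jstar_jstar

lemma eq_or_eq_jstar_of_fst_eq {x y : J n} (h : x.1 = y.1) : y = x ∨ y = jstar x := by
  obtain ⟨i, s⟩ := x
  obtain ⟨j, t⟩ := y
  cases s <;> cases t <;> simp_all [jstar]

lemma mem_starSet {K : Finset (J n)} {x : J n} : x ∈ starSet K ↔ jstar x ∈ K := by
  simp only [starSet, mem_image]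
  constructor
  · rintro ⟨y, hy, rfl⟩
    rwa [jstar_jstar]
  · exact fun hx => ⟨_, hx, jstar_jstar x⟩

lemma card_starSet (K : Finset (J n)) : #(starSet K) = #K :=
  card_image_of_injective K jstar_injective

namespace Admissible

variable {B : Finset (J n)}

lemma disjoint_starSet (h : Admissible B) : Disjoint B (starSet B) :=
  disjoint_iff_inter_eq_empty.2 h

lemma union_starSet_eq_univ (h : Admissible B) (hc : #B = n) : B ∪ starSet B = univ := by
  apply eq_univ_of_card
  rw [card_union_of_disjoint h.disjoint_starSet, card_starSet, hc, Fintype.card_prod,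
    Fintype.card_fin, Fintype.card_bool]
  ring

lemma jstar_mem_iff (h : Admissible B) (hc : #B = n) (x : J n) : jstar x ∈ B ↔ x ∉ B := by
  constructor
  · exact fun hx hxB => disjoint_left.1 h.disjoint_starSet hxB (mem_starSet.2 hx)
  · intro hx
    have hx' : x ∈ B ∪ starSet B := h.union_starSet_eq_univ hc ▸ mem_univ x
    simpa [mem_starSet, hx] using hx'

end Admissible

lemma Finset.card_symmDiff_add_two_mul_card_inter {α : Type*} [DecidableEq α] (s t : Finset α) :
    #(s ∆ t) + 2 * #(s ∩ t) = #s + #t := by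
  rw [Finset.symmDiff_def, card_union_of_disjoint disjoint_sdiff_sdiff,
    ← card_sdiff_add_card_inter s t, ← card_sdiff_add_card_inter t s, inter_comm t s]
  ring

lemma Finset.card_symmDiff_symmDiff_lt {α : Type*} [DecidableEq α] {s t u : Finset α}
    (hu : u ⊆ s ∆ t) (hne : u.Nonempty) : #(s ∆ u ∆ t) < #(s ∆ t) := by
  rw [symmDiff_right_comm, symmDiff_of_ge hu]
  exact card_lt_card (sdiff_ssubset hu hne)

def starParity (A : Finset (J n)) : ZMod 2 := starCount A

lemma starParity_symmDiff (X Y : Finset (J n)) :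
    starParity (X ∆ Y) = starParity X + starParity Y := by
  have hfilter : (X ∆ Y).filter (·.2 = true) = X.filter (·.2 = true) ∆ Y.filter (·.2 = true) := by
    ext
    simp only [mem_filter, mem_symmDiff]
    tauto
  have hcard := congrArg (Nat.cast : ℕ → ZMod 2)
    (card_symmDiff_add_two_mul_card_inter (X.filter (·.2 = true)) (Y.filter (·.2 = true)))
  push_cast [show (2 : ZMod 2) = 0 from rfl] at hcard
  simpa only [starParity, starCount, hfilter, zero_mul, add_zero] using hcard

lemma starParity_pair_jstar (x : J n) : starParity {x, jstar x} = 1 := by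
  obtain ⟨i, _ | _⟩ := x <;> simp [starParity, starCount, jstar, filter_insert, filter_singleton]

lemma starParity_exchangeSet {a b : J n} (h : a.1 ≠ b.1) :
    starParity {a, b, jstar a, jstar b} = 0 := by
  have hdisj : Disjoint ({a, jstar a} : Finset (J n)) {b, jstar b} := by
    simp [jstar, Prod.ext_iff, Ne.symm h]
  have hsplit : ({a, b, jstar a, jstar b} : Finset (J n)) = {a, jstar a} ∆ {b, jstar b} := by
    rw [symmDiff_eq_union hdisj]
    ext
    simp only [mem_insert, mem_singleton, mem_union]
    tauto
  rw [hsplit, starParity_symmDiff, starParity_pair_jstar, starParity_pair_jstar]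
  rfl

lemma StrongExchange.exists_closer_same_parity {𝔅 : Set (Finset (J n))}
    (hSE : StrongExchange 𝔅) (hadm : ∀ B ∈ 𝔅, Admissible B ∧ #B = n)
    {A C : Finset (J n)} (hA : A ∈ 𝔅) (hC : C ∈ 𝔅) (hAC : A ≠ C) :
    ∃ A' ∈ 𝔅, starParity A' = starParity A ∧ #(A' ∆ C) < #(A ∆ C) := by
  obtain ⟨hAa, hAn⟩ := hadm A hA
  obtain ⟨hCa, hCn⟩ := hadm C hC
  obtain ⟨a, haA, haC⟩ : ∃ a ∈ A, a ∉ C := by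
    by_contra! h
    exact hAC (eq_of_subset_of_card_le h (by rw [hAn, hCn]))
  obtain ⟨b, hb, hba, hA', -⟩ := hSE A hA C hC a (mem_symmDiff.2 (.inl ⟨haA, haC⟩))
  obtain ⟨hbC, hbA⟩ := mem_sdiff.1 hb
  have hab : a.1 ≠ b.1 := fun h =>
    (eq_or_eq_jstar_of_fst_eq h).elim (fun hba => haC (hba ▸ hbC)) hba
  have hsub : {a, b, jstar a, jstar b} ⊆ A ∆ C := by
    simp only [insert_subset_iff, singleton_subset_iff, mem_symmDiff, hAa.jstar_mem_iff hAn,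
      hCa.jstar_mem_iff hCn]
    tauto
  refine ⟨_, hA', ?_, card_symmDiff_symmDiff_lt hsub (insert_nonempty _ _)⟩
  rw [starParity_symmDiff, starParity_exchangeSet hab, add_zero]
end

/-- all bases of a Lagrangian orthogonal matroid have the same parity. -/
theorem bases_same_parity (n : ℕ) (𝔅 : Set (Finset (J n)))
    (hadm : ∀ B ∈ 𝔅, Admissible B ∧ B.card = n)
    (hSE : StrongExchange 𝔅) :
    ∀ A ∈ 𝔅, ∀ C ∈ 𝔅, starCount A % 2 = starCount C % 2 := by
  intro A hA C hC
  suffices starParity A = starParity C from (ZMod.natCast_eq_natCast_iff' _ _ _).1 this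
  induction hd : #(A ∆ C) using Nat.strong_induction_on generalizing A with
  | _ d ih =>
    by_cases hAC : A = C
    · rw [hAC]
    obtain ⟨A', hA', hpar, hlt⟩ := hSE.exists_closer_same_parity hadm hA hC hAC
    exact hpar ▸ ih _ (hd ▸ hlt) A' hA' rfl
end

section
/- Let M be an ordinary matroid on [n]. Then B is the maximal basis of M under a linear order ≤ on [n] if and only if Φ(B) is the maximal basis of Φ(M) under the Gale order induced by any D_n-admissible order extending ≤. -/
/-- Gale order: `A ≤ B` iff there is an injection of `A` into `B` increasing each element. -/
def GaleLE {α : Type*} (r : α → α → Prop) (A B : Finset α) : Prop :=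
  ∃ f : α → α, Set.InjOn f A ∧ (∀ a ∈ A, f a ∈ B) ∧ ∀ a ∈ A, r a (f a)

/-- A `Dₙ`-admissible ordering of `[n] ∪ [n]*`: a partial order reversed by `*`,
linear except that the middle two elements (a pair `{i, i*}`) are incomparable. -/
structure DnOrder (n : ℕ) where
  le : J n → J n → Prop
  refl : ∀ i, le i i
  trans : ∀ i j k, le i j → le j k → le i k
  antisymm : ∀ i j, le i j → le j i → i = j
  star_anti : ∀ i j, le i j → le (jstar j) (jstar i)
  almost_total : ∀ i j : J n, le i j ∨ le j i ∨ j = jstar i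
  middle : ∃ i : J n, ¬ le i (jstar i) ∧ ¬ le (jstar i) i

/-- `ℬ` is the collection of bases of a matroid of rank `k` on `[n]`. -/
def MatroidBases {n : ℕ} (k : ℕ) (ℬ : Set (Finset (Fin n))) : Prop :=
  ℬ.Nonempty ∧ (∀ B ∈ ℬ, B.card = k) ∧
    ∀ A ∈ ℬ, ∀ B ∈ ℬ, ∀ a ∈ A \ B, ∃ b ∈ B \ A, insert b (A.erase a) ∈ ℬ

/-- `Φ(B) = B ∪ ([n] \ B)*`. -/
def Phi {n : ℕ} (B : Finset (Fin n)) : Finset (J n) :=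
  B.image (fun i => (i, false)) ∪ Bᶜ.image (fun i => (i, true))

/-!
For a linear order, `A ≤ B` in the Gale order iff each up-set `{x | t ≤ x}` meets `A` in at most
as many elements as `B` (Hall's theorem). When `#A = #B` this is equivalent to the dual condition
on the complements, so Gale injections `A → B` for `≤` and `Aᶜ → Bᶜ` for `≥` glue to one
`Φ(A) → Φ(B)` for every `Dₙ`-admissible order extending `≤`. Conversely, in the `Dₙ`-admissible
order where every `i` precedes every `j*` except for the maximum `m` and `m*`, the set
`[n]* ∪ {i | t ≤ i}` is an up-set; counting it in `Φ(A)` and `Φ(B)` recovers the up-set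
condition for `A` and `B`.
-/

open Finset Function

section Gale

variable {α : Type*} {r : α → α → Prop}

theorem Finset.Nonempty.exists_mem_forall_rel [IsTrans α r] [Std.Total r] {s : Finset α}
    (hs : s.Nonempty) : ∃ m ∈ s, ∀ x ∈ s, r x m := by
  induction hs using Finset.Nonempty.cons_induction with
  | singleton a => exact ⟨a, mem_singleton_self a, fun x hx => mem_singleton.1 hx ▸ refl_of r x⟩
  | cons a s _ _ ih =>
    obtain ⟨m, hm, hmax⟩ := ih
    rcases total_of r a m with ham | hma
    · exact ⟨m, mem_cons_of_mem hm, by simpa [ham] using hmax⟩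
    · exact ⟨a, mem_cons_self a s, by
        simpa [refl_of r a] using fun x hx => _root_.trans (hmax x hx) hma⟩

theorem galeLE_of_injective {A B : Finset α} (f : A → α) (hf : Injective f)
    (hfB : ∀ a : A, f a ∈ B) (hr : ∀ a : A, r a (f a)) : GaleLE r A B := by
  classical
  refine ⟨fun x => if hx : x ∈ A then f ⟨x, hx⟩ else x, fun x hx y hy hxy => ?_,
    fun a ha => by simpa [ha] using hfB ⟨a, ha⟩, fun a ha => by simpa [ha] using hr ⟨a, ha⟩⟩
  rw [mem_coe] at hx hy
  simp only [dif_pos hx, dif_pos hy] at hxy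
  exact congrArg Subtype.val (hf hxy)

theorem GaleLE.card_filter_le {A B : Finset α} (hAB : GaleLE r A B) (p : α → Prop)
    [DecidablePred p] (hp : ∀ a b, p a → r a b → p b) : #{a ∈ A | p a} ≤ #{b ∈ B | p b} := by
  obtain ⟨f, hinj, hfB, hfr⟩ := hAB
  refine card_le_card_of_injOn f (fun a ha => ?_) (hinj.mono (coe_subset.2 (filter_subset _ _)))
  rw [mem_coe, mem_filter] at ha ⊢
  exact ⟨hfB a ha.1, hp a (f a) ha.2 (hfr a ha.1)⟩

theorem galeLE_of_card_filter_le [IsTrans α r] [Std.Total r] [DecidableEq α] [DecidableRel r]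
    {A B : Finset α} (hcard : ∀ t ∈ A, #{a ∈ A | r t a} ≤ #{b ∈ B | r t b}) :
    GaleLE r A B := by
  -- Hall's condition for `s` is the count at the `r`-least element of `s`.
  have hall : ∀ s : Finset A, #s ≤ #(s.biUnion fun a => {b ∈ B | r a b}) := by
    intro s
    obtain rfl | hs := s.eq_empty_or_nonempty
    · simp
    obtain ⟨t, ht, hmin⟩ := (hs.map (f := Embedding.subtype _)).exists_mem_forall_rel (r := swap r)
    obtain ⟨⟨t, htA⟩, hts, rfl⟩ := mem_map.1 ht
    calc #s = #(s.map (Embedding.subtype _)) := (card_map _).symm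
      _ ≤ #{a ∈ A | r t a} := card_le_card fun a ha => mem_filter.2
          ⟨by obtain ⟨a, -, rfl⟩ := mem_map.1 ha; exact a.2, hmin a ha⟩
      _ ≤ #{b ∈ B | r t b} := hcard t htA
      _ ≤ _ := card_le_card (subset_biUnion_of_mem (fun a : A => {b ∈ B | r a b}) hts)
  obtain ⟨f, hf, hfB⟩ := (all_card_le_biUnion_card_iff_exists_injective _).1 hall
  exact galeLE_of_injective f hf (fun a => (mem_filter.1 (hfB a)).1)
    (fun a => (mem_filter.1 (hfB a)).2)

theorem card_filter_add_card_filter_compl [Fintype α] [DecidableEq α] (A : Finset α)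
    (p : α → Prop) [DecidablePred p] : #{a ∈ A | p a} + #{a ∈ Aᶜ | p a} = #{a | p a} := by
  rw [← card_union_of_disjoint (disjoint_filter_filter disjoint_compl_right), ← filter_union,
    union_compl]

theorem GaleLE.compl [Fintype α] [DecidableEq α] [IsTrans α r] [Std.Total r] {A B : Finset α}
    (hAB : GaleLE r A B) (hcard : #A = #B) : GaleLE (swap r) Aᶜ Bᶜ := by
  classical
  refine galeLE_of_card_filter_le fun t _ => ?_
  have hup := hAB.card_filter_le (fun a => ¬ r a t) fun a b hat hab hbt =>
    hat (_root_.trans hab hbt)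
  have hA := card_filter_add_card_filter_not (s := A) (r · t)
  have hB := card_filter_add_card_filter_not (s := B) (r · t)
  have hAc := card_filter_add_card_filter_compl A (r · t)
  have hBc := card_filter_add_card_filter_compl B (r · t)
  simp only [swap]
  omega

theorem GaleLE.image {β : Type*} [DecidableEq β] {R : β → β → Prop} {e : α → β}
    (he : Injective e) (hR : ∀ a b, r a b → R (e a) (e b)) {A B : Finset α}
    (hAB : GaleLE r A B) : GaleLE R (A.image e) (B.image e) := by
  obtain ⟨f, hinj, hfB, hfr⟩ := hAB
  refine ⟨extend e (e ∘ f) id, ?_, ?_, ?_⟩ <;>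
    simp only [coe_image, Set.InjOn, Set.forall_mem_image, forall_mem_image, he.extend_apply,
      comp_apply]
  · exact fun a ha b hb hab => congrArg e (hinj ha hb (he hab))
  · exact fun a ha => mem_image_of_mem e (hfB a ha)
  · exact fun a ha => hR a (f a) (hfr a ha)

theorem GaleLE.union [DecidableEq α] {A A' B B' : Finset α} (hAB : GaleLE r A B)
    (hAB' : GaleLE r A' B') (hdisj : Disjoint B B') : GaleLE r (A ∪ A') (B ∪ B') := by
  obtain ⟨f, hinj, hfB, hfr⟩ := hAB
  obtain ⟨f', hinj', hfB', hfr'⟩ := hAB'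
  have hA' : ∀ x ∈ A ∪ A', x ∉ A → x ∈ A' := fun x hx => (mem_union.1 hx).resolve_left
  refine ⟨fun x => if x ∈ A then f x else f' x, fun x hx y hy hxy => ?_, fun x hx => ?_,
    fun x hx => ?_⟩
  · dsimp only at hxy
    split_ifs at hxy with hxA hyA hyA
    · exact hinj hxA hyA hxy
    · exact (disjoint_left.1 hdisj (hfB x hxA) (hxy ▸ hfB' y (hA' y hy hyA))).elim
    · exact (disjoint_left.1 hdisj (hfB y hyA) (hxy ▸ hfB' x (hA' x hx hxA))).elim
    · exact hinj' (hA' x hx hxA) (hA' y hy hyA) hxy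
  · dsimp only
    split_ifs with hxA
    exacts [mem_union_left _ (hfB x hxA), mem_union_right _ (hfB' x (hA' x hx hxA))]
  · dsimp only
    split_ifs with hxA
    exacts [hfr x hxA, hfr' x (hA' x hx hxA)]

end Gale

section Phi

variable {n : ℕ}

theorem disjoint_image_false_image_true {β : Type*} [DecidableEq β] (A C : Finset β) :
    Disjoint (A.image (·, false)) (C.image (·, true)) := by
  simp [disjoint_left]

theorem card_filter_phi (A : Finset (Fin n)) (p : J n → Prop) [DecidablePred p] :
    #{x ∈ Phi A | p x} = #{i ∈ A | p (i, false)} + #{i ∈ Aᶜ | p (i, true)} := by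
  rw [Phi, filter_union, filter_image, filter_image,
    card_union_of_disjoint (disjoint_image_false_image_true _ _),
    card_image_of_injective _ (Prod.mk_left_injective false),
    card_image_of_injective _ (Prod.mk_left_injective true)]

theorem galeLE_phi {ro : Fin n → Fin n → Prop} (d : DnOrder n)
    (hd : ∀ i j, d.le (i, false) (j, false) ↔ ro i j) {A B : Finset (Fin n)}
    (hAB : GaleLE ro A B) (hAB_compl : GaleLE (swap ro) Aᶜ Bᶜ) :
    GaleLE d.le (Phi A) (Phi B) :=
  (hAB.image (Prod.mk_left_injective false) fun i j hij => (hd i j).2 hij).union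
    (hAB_compl.image (Prod.mk_left_injective true) fun i j hij => d.star_anti _ _ ((hd j i).2 hij))
    (disjoint_image_false_image_true B Bᶜ)

end Phi

section OfTop

variable {n : ℕ} (ro : Fin n → Fin n → Prop) [IsLinearOrder (Fin n) ro] (m : Fin n)
  (hm : ∀ i, ro i m)

def DnOrder.ofTop : DnOrder n where
  le x y := match x, y with
    | (i, false), (j, false) => ro i j
    | (i, true), (j, true) => ro j i
    | (i, false), (j, true) => ¬(i = m ∧ j = m)
    | (_, true), (_, false) => False
  refl := by rintro ⟨i, _ | _⟩ <;> exact refl_of ro i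
  trans := by
    rintro ⟨i, _ | _⟩ ⟨j, _ | _⟩ ⟨k, _ | _⟩ hij hjk <;> simp only at hij hjk ⊢
    · exact _root_.trans hij hjk
    · rintro ⟨rfl, rfl⟩
      exact hjk ⟨_root_.antisymm (hm j) hij, rfl⟩
    · rintro ⟨rfl, rfl⟩
      exact hij ⟨rfl, _root_.antisymm (hm j) hjk⟩
    · exact _root_.trans hjk hij
  antisymm := by
    rintro ⟨i, _ | _⟩ ⟨j, _ | _⟩ hij hji <;> simp only at hij hji
    · rw [_root_.antisymm hij hji]
    · rw [_root_.antisymm hji hij]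
  star_anti := by
    rintro ⟨i, _ | _⟩ ⟨j, _ | _⟩ hij <;> simp only [jstar] at hij ⊢
    · exact hij
    · exact fun h => hij h.symm
    · exact hij
  almost_total := by
    rintro ⟨i, _ | _⟩ ⟨j, _ | _⟩ <;>
      simp only [jstar, Bool.not_false, Bool.not_true, Prod.mk.injEq, and_true, false_or]
    · exact (total_of ro i j).imp_right Or.inl
    · grind
    · grind
    · exact (total_of ro j i).imp_right Or.inl
  middle := ⟨(m, false), fun h => h ⟨rfl, rfl⟩, fun h => h⟩

theorem galeLE_of_galeLE_phi {A B : Finset (Fin n)}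
    (hphi : GaleLE (DnOrder.ofTop ro m hm).le (Phi A) (Phi B)) (hcard : #A = #B) :
    GaleLE ro A B := by
  classical
  refine galeLE_of_card_filter_le fun t _ => ?_
  have hup := hphi.card_filter_le (fun x => x.2 = true ∨ ro t x.1) <| by
    rintro ⟨i, _ | _⟩ ⟨j, _ | _⟩ hi hij
    · exact Or.inr (_root_.trans (hi.resolve_left Bool.false_ne_true) hij)
    · exact Or.inl rfl
    · exact hij.elim
    · exact Or.inl rfl
  have hcard_compl : #Aᶜ = #Bᶜ := by rw [card_compl, card_compl, hcard]
  simp only [card_filter_phi, Bool.false_eq_true, false_or, true_or, filter_true] at hup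
  omega

end OfTop

/-- `B` is the maximal basis of a matroid `M` under a linear order `≤` on
`[n]` iff `Φ(B)` is the maximal basis of `Φ(M)` under the Gale order induced by any
`Dₙ`-admissible order extending `≤`. -/
theorem max_basis_iff_phi_max (n k : ℕ) (ℬ : Set (Finset (Fin n))) (h : MatroidBases k ℬ)
    (ro : Fin n → Fin n → Prop) (hro : IsLinearOrder (Fin n) ro)
    (B : Finset (Fin n)) (hB : B ∈ ℬ) :
    (∀ A ∈ ℬ, GaleLE ro A B) ↔
      ∀ d : DnOrder n, (∀ i j : Fin n, d.le (i, false) (j, false) ↔ ro i j) →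
        ∀ A ∈ ℬ, GaleLE d.le (Phi A) (Phi B) := by
  have hcard : ∀ A ∈ ℬ, #A = #B := fun A hA => (h.2.1 A hA).trans (h.2.1 B hB).symm
  constructor
  · intro hmax d hd A hA
    exact galeLE_phi d hd (hmax A hA) ((hmax A hA).compl (hcard A hA))
  · intro hphi A hA
    rcases isEmpty_or_nonempty (Fin n) with _ | _
    · exact ⟨id, Set.injOn_id _, fun a => isEmptyElim a, fun a => isEmptyElim a⟩
    obtain ⟨m, -, hm⟩ := (univ_nonempty (α := Fin n)).exists_mem_forall_rel (r := ro)
    exact galeLE_of_galeLE_phi ro m (fun i => hm i (mem_univ i))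
      (hphi _ (fun _ _ => Iff.rfl) A hA) (hcard A hA)
end
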